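/- arXiv:1211.1272 — 2 statements merged into one kernel-verified Lean document; each statement's English description precedes it below -/
import Mathlib

section
/- Let F be an algebraically closed field, let s ≥ 1 be an integer, and let A be a unital F-subalgebra of the matrix algebra M_s(F) all of whose elements are upper triangular matrices. If A is a semisimple ring, then A is commutative. -/
lemma strict_pow_zero {F : Type*} [Field F] {s : ℕ} (x : Matrix (Fin s) (Fin s) F)
    (h : ∀ i j : Fin s, (j : ℕ) ≤ (i : ℕ) → x i j = 0) :
    ∀ k (i j : Fin s), (j : ℕ) < (i : ℕ) + k → (x ^ k) i j = 0 := by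
  intro k
  induction k with
  | zero =>
    intro i j hij
    simp only [pow_zero]
    have : i ≠ j := by
      intro h'; subst h'; omega
    simp [Matrix.one_apply, this]
  | succ k ih =>
    intro i j hij
    rw [pow_succ']
    rw [Matrix.mul_apply]
    apply Finset.sum_eq_zero
    intro l _
    rcases le_or_gt (l : ℕ) (i : ℕ) with hl | hl
    · rw [h i l hl, zero_mul]
    · rw [ih l j (by omega), mul_zero]

/-- Let `F` be an algebraically closed field, `s ≥ 1`, and let `A` be a
unital `F`-subalgebra of `M_s(F)` all of whose elements are upper triangular. If `A` is a
semisimple ring, then `A` is commutative. -/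
theorem stmt7 (F : Type*) [Field F] [IsAlgClosed F] (s : ℕ) (hs : 1 ≤ s)
    (A : Subalgebra F (Matrix (Fin s) (Fin s) F))
    (hut : ∀ x ∈ A, ∀ i j : Fin s, j < i → x i j = 0)
    (hss : IsSemisimpleRing A) :
    ∀ x ∈ A, ∀ y ∈ A, x * y = y * x := by
  -- diagonal map
  have diag_mul : ∀ x ∈ A, ∀ y ∈ A, ∀ i : Fin s, (x * y) i i = x i i * y i i := by
    intro x hx y hy i
    rw [Matrix.mul_apply]
    rw [Finset.sum_eq_single i]
    · intro l _ hl
      rcases lt_or_gt_of_ne hl with h | h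
      · rw [hut x hx i l h, zero_mul]
      · rw [hut y hy l i h, mul_zero]
    · intro h; exact absurd (Finset.mem_univ i) h
  let φ : A →+* (Fin s → F) :=
    { toFun := fun a i => (a : Matrix (Fin s) (Fin s) F) i i
      map_one' := by funext i; simp [Matrix.one_apply]
      map_mul' := fun a b => by
        funext i
        exact diag_mul a.1 a.2 b.1 b.2 i
      map_zero' := by funext i; simp
      map_add' := fun a b => by funext i; simp }
  -- kernel is nil
  have hnil : ∀ a : A, φ a = 0 → a ^ s = 0 := by
    intro a ha
    have hsz : ∀ i j : Fin s, (j : ℕ) ≤ (i : ℕ) → (a : Matrix (Fin s) (Fin s) F) i j = 0 := by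
      intro i j hij
      rcases eq_or_lt_of_le hij with h | h
      · have : j = i := Fin.ext h
        subst this
        exact congrFun ha j
      · exact hut a.1 a.2 i j (by exact h)
    have := strict_pow_zero (a : Matrix (Fin s) (Fin s) F) hsz s
    have hpow : ((a : Matrix (Fin s) (Fin s) F)) ^ s = 0 := by
      ext i j
      exact this i j (by omega)
    have : ((a ^ s : A) : Matrix (Fin s) (Fin s) F) = 0 := by
      push_cast
      exact hpow
    exact Subtype.ext this
  -- kernel is zero
  have hker : RingHom.ker φ = ⊥ := by
    obtain ⟨e, he, hspan⟩ := IsSemisimpleRing.ideal_eq_span_idempotent (RingHom.ker φ)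
    have heker : e ∈ RingHom.ker φ := hspan ▸ Ideal.subset_span rfl
    have hes : e ^ s = 0 := hnil e heker
    have : e = 0 := by
      rcases Nat.exists_eq_add_of_le hs with ⟨k, hk⟩
      have := he.pow_succ_eq k
      rw [show k + 1 = s by omega] at this
      rw [← this, hes]
    rw [hspan, this, Ideal.span_singleton_eq_bot.mpr rfl]
  have hinj : Function.Injective φ := by
    rwa [RingHom.injective_iff_ker_eq_bot]
  intro x hx y hy
  have : (⟨x, hx⟩ : A) * ⟨y, hy⟩ = ⟨y, hy⟩ * ⟨x, hx⟩ := by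
    apply hinj
    rw [map_mul, map_mul, mul_comm]
  exact Subtype.ext_iff.mp this
end

section
/- For every integer d ≥ 1 and every integer p ≥ 0 there exist a constant C > 0 and an exponent r ∈ ℝ such that for all integers k with 2k > p, the inequality of real numbers (d(2k−p))! / ((2k−p+d)!)^d ≥ C · k^r · d^{2kd} holds. -/
/-!
The quotient `(dn)! / (n!)^d` is a multinomial coefficient, hence `d^{dn}` up to a polynomial
factor, and `(n + d)! ≤ n! (n + d)^d`. With `n = 2k - p` this makes the left-hand side
`d^{2kd} d^{-dp}` up to a polynomial factor in `k`.
-/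

open Nat

namespace Nat

theorem factorial_add_le_factorial_mul_pow (n m : ℕ) : (n + m)! ≤ n ! * (n + m) ^ m := by
  rw [← factorial_mul_ascFactorial]
  exact Nat.mul_le_mul_left _ (ascFactorial_le_pow_add n m)

theorem pow_mul_factorial_pow_le_factorial_mul_pow (d n : ℕ) :
    d ^ (d * n) * n ! ^ d ≤ (d * n)! * (d * n + 1) ^ d := by
  induction n with
  | zero => simp
  | succ n ih =>
    calc d ^ (d * (n + 1)) * (n + 1)! ^ d
        = d ^ (d * n) * n ! ^ d * (d * n + d) ^ d := by
          rw [factorial_succ, ← mul_add_one, mul_pow, mul_pow, mul_add_one d n, pow_add]; ring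
      _ ≤ (d * n)! * (d * n + 1) ^ d * (d * n + d + 1) ^ d :=
          Nat.mul_le_mul ih (Nat.pow_le_pow_left (by omega) d)
      _ ≤ (d * (n + 1))! * (d * (n + 1) + 1) ^ d := by
          rw [mul_add_one]
          gcongr
          exact factorial_mul_pow_le_factorial

end Nat

theorem pow_mul_factorial_sub_add_pow_le (d p m : ℕ) (hpm : p < m) :
    d ^ (m * d) * (m - p + d)! ^ d ≤ ((d + 1) * m) ^ (d * (p + d + 1)) * (d * (m - p))! := by
  generalize hn : m - p = n
  have hnm : n + p = m := by omega
  have hd : d ≤ (d + 1) * m := by nlinarith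
  have hnd : n + d ≤ (d + 1) * m := by nlinarith
  have hdn : d * n + 1 ≤ (d + 1) * m := by nlinarith
  calc d ^ (m * d) * (n + d)! ^ d
      = d ^ (d * p) * (d ^ (d * n) * (n + d)! ^ d) := by
        rw [← mul_assoc, ← pow_add, ← hnm]; ring_nf
    _ ≤ d ^ (d * p) * (d ^ (d * n) * (n ! ^ d * (n + d) ^ (d * d))) := by
        rw [pow_mul (n + d), ← mul_pow]
        gcongr
        exact factorial_add_le_factorial_mul_pow n d
    _ = d ^ (d * p) * (n + d) ^ (d * d) * (d ^ (d * n) * n ! ^ d) := by ring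
    _ ≤ d ^ (d * p) * (n + d) ^ (d * d) * ((d * n)! * (d * n + 1) ^ d) :=
        Nat.mul_le_mul_left _ (pow_mul_factorial_pow_le_factorial_mul_pow d n)
    _ ≤ ((d + 1) * m) ^ (d * p) * ((d + 1) * m) ^ (d * d) * ((d * n)! * ((d + 1) * m) ^ d) := by
        gcongr
    _ = ((d + 1) * m) ^ (d * (p + d + 1)) * (d * n)! := by ring

theorem stmt13_general (d p : ℕ) :
    ∃ (C r : ℝ), 0 < C ∧ ∀ k : ℕ, p < 2 * k →
      C * (k : ℝ) ^ r * (d : ℝ) ^ (2 * k * d) ≤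
        (Nat.factorial (d * (2 * k - p)) : ℝ) /
          ((Nat.factorial (2 * k - p + d) : ℝ)) ^ d := by
  set N := d * (p + d + 1)
  refine ⟨1 / (2 * (d + 1) : ℝ) ^ N, -N, by positivity, fun k hk => ?_⟩
  have hk0 : (0 : ℝ) < k := by exact_mod_cast (by omega : 0 < k)
  have key : (d : ℝ) ^ (2 * k * d) * ((2 * k - p + d)! : ℝ) ^ d
      ≤ (2 * (d + 1) : ℝ) ^ N * (k : ℝ) ^ N * ((d * (2 * k - p))! : ℝ) := by
    rw [← mul_pow, show (2 * (d + 1) * k : ℝ) = (d + 1) * (2 * k) by ring]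
    exact_mod_cast pow_mul_factorial_sub_add_pow_le d p (2 * k) hk
  rw [Real.rpow_neg hk0.le, Real.rpow_natCast, le_div_iff₀ (by positivity)]
  calc 1 / (2 * (d + 1) : ℝ) ^ N * ((k : ℝ) ^ N)⁻¹ * (d : ℝ) ^ (2 * k * d)
        * ((2 * k - p + d)! : ℝ) ^ d
      = (d : ℝ) ^ (2 * k * d) * ((2 * k - p + d)! : ℝ) ^ d
        / ((2 * (d + 1) : ℝ) ^ N * (k : ℝ) ^ N) := by ring
    _ ≤ ((d * (2 * k - p))! : ℝ) := by
        rwa [div_le_iff₀ (by positivity), mul_comm ((d * (2 * k - p))! : ℝ)]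

/-- For all integers `d ≥ 1` and `p ≥ 0` there exist `C > 0` and `r ∈ ℝ`
such that for all integers `k` with `2k > p` one has
`(d(2k−p))! / ((2k−p+d)!)^d ≥ C · k^r · d^{2kd}` in `ℝ`. -/
theorem stmt13 (d p : ℕ) (hd : 1 ≤ d) :
    ∃ (C r : ℝ), 0 < C ∧ ∀ k : ℕ, p < 2 * k →
      C * (k : ℝ) ^ r * (d : ℝ) ^ (2 * k * d) ≤
        (Nat.factorial (d * (2 * k - p)) : ℝ) /
          ((Nat.factorial (2 * k - p + d) : ℝ)) ^ d :=
  stmt13_general d p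
end
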